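/- arXiv:2303.06243 — 3 statements merged into one kernel-verified Lean document; each statement's English description precedes it below -/
import Mathlib

section
/- Let k be a positive integer, Γ be e^{-1/k} times the backward shift on ℓ²(ℤ), and A = I − Γ. Then for every γ > 0 there exists C_γ > 0 such that |A_{s,t}| ≤ C_γ e^{-γ|s−t|} for all s,t ∈ ℤ, but if γ > 1/k then there is no constant C > 0 with |(A^{-1})_{s,t}| ≤ C e^{-γ|s−t|} for all s,t ∈ ℤ. -/
/-!
`Γ` acts coordinatewise by `(Γ f) s = c * f (s + 1)` with `c = exp (-1 / k) < 1`, so `‖Γ‖ ≤ c`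
and `(1 - Γ)⁻¹ = ∑ Γⁿ` is a Neumann series whose `(s, s + n)` entry is `cⁿ = exp (-n / k)`.
The matrix of `1 - Γ` is supported on two diagonals with entries of norm at most `1`, so it
decays at every exponential rate, while the entries `exp (-n / k)` of the inverse are not
`O (exp (-γ n))` once `γ > 1 / k`.
-/

open scoped ENNReal

namespace lp

variable {α 𝕜 : Type*} {p : ℝ≥0∞}

theorem norm_eq_mul_of_norm_apply_eq {E : α → Type*} [∀ i, NormedAddCommGroup (E i)]
    (hp : 0 < p.toReal) (e : α ≃ α) {r : ℝ} (hr : 0 ≤ r) {f g : lp E p}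
    (h : ∀ i, ‖g i‖ = r * ‖f (e i)‖) : ‖g‖ = r * ‖f‖ := by
  refine (Real.rpow_left_inj (norm_nonneg' g) (mul_nonneg hr (norm_nonneg' f)) hp.ne').1 ?_
  rw [Real.mul_rpow hr (norm_nonneg' f), norm_rpow_eq_tsum hp, norm_rpow_eq_tsum hp,
    ← tsum_mul_left]
  simp only [h, Real.mul_rpow hr (norm_nonneg _)]
  exact e.tsum_eq fun i => r ^ p.toReal * ‖f i‖ ^ p.toReal

variable [NontriviallyNormedField 𝕜] [DecidableEq α] [Fact (1 ≤ p)]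

theorem hasSum_apply_single_mul (hp : p ≠ ⊤)
    (T : lp (fun _ : α => 𝕜) p →L[𝕜] lp (fun _ : α => 𝕜) p) (f : lp (fun _ : α => 𝕜) p)
    (s : α) : HasSum (fun t => T (lp.single p t 1) s * f t) (T f s) := by
  have key : ∀ t,
      (evalCLM 𝕜 _ p s).comp T (lp.single p t (f t)) = T (lp.single p t 1) s * f t :=
    fun t => by
      have hs : lp.single (E := fun _ : α => 𝕜) p t (f t) = f t • lp.single p t 1 := by
        rw [← lp.single_smul, smul_eq_mul, mul_one]
      rw [hs, map_smul, smul_eq_mul, mul_comm]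
      rfl
  exact funext key ▸ ((evalCLM 𝕜 _ p s).comp T).hasSum (lp.hasSum_single hp f)

section WeightedShift

variable {T : lp (fun _ : ℤ => 𝕜) p →L[𝕜] lp (fun _ : ℤ => 𝕜) p} {a : 𝕜}

section Entries

variable (hT : ∀ s t : ℤ, T (lp.single p t 1) s = if t = s + 1 then a else 0)
include hT

theorem apply_eq_mul_apply_add_one_of_single (hp : p ≠ ⊤) (f : lp (fun _ : ℤ => 𝕜) p)
    (s : ℤ) : T f s = a * f (s + 1) := by
  have h := hasSum_apply_single_mul hp T f s
  have hterm : (fun t : ℤ => T (lp.single p t 1) s * f t) =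
      fun t => if t = s + 1 then a * f (s + 1) else 0 := by
    funext t
    rw [hT]
    split_ifs with ht <;> simp [ht]
  rw [hterm] at h
  exact h.unique (hasSum_ite_eq (s + 1) _)

theorem norm_one_sub_apply_single_le_one (ha : ‖a‖ ≤ 1) (s t : ℤ) :
    ‖(1 - T) (lp.single p t 1) s‖ ≤ 1 := by
  rw [sub_apply, coeFn_sub, Pi.sub_apply, hT, one_apply_eq_self, lp.single_apply,
    Pi.single_apply]
  split_ifs <;> simp_all

theorem one_sub_apply_single_eq_zero {s t : ℤ} (hst : 1 < |s - t|) :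
    (1 - T) (lp.single p t 1) s = 0 := by
  rw [lt_abs] at hst
  rw [sub_apply, coeFn_sub, Pi.sub_apply, hT, one_apply_eq_self, lp.single_apply,
    Pi.single_apply, if_neg (by omega), if_neg (by omega), sub_zero]

end Entries

section Coordinates

variable (hT : ∀ f s, T f s = a * f (s + 1))
include hT

theorem pow_apply_eq_pow_mul (n : ℕ) (f : lp (fun _ : ℤ => 𝕜) p) (s : ℤ) :
    (T ^ n) f s = a ^ n * f (s + n) := by
  induction n generalizing s with
  | zero => simp
  | succ n ih =>
    rw [pow_succ', mul_apply_eq_comp, hT, ih, pow_succ', mul_assoc]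
    push_cast
    ring_nf

theorem norm_le_of_apply_eq_mul_apply_add_one (hp : p ≠ ⊤) : ‖T‖ ≤ ‖a‖ :=
  T.opNorm_le_bound (norm_nonneg a) fun f =>
    (norm_eq_mul_of_norm_apply_eq (ENNReal.toReal_pos (zero_lt_one.trans_le Fact.out).ne' hp)
      (Equiv.addRight 1) (norm_nonneg a) fun s => by simp [hT]).le

theorem inverse_one_sub_single_apply [CompleteSpace 𝕜] (hp : p ≠ ⊤) (ha : ‖a‖ < 1)
    (s : ℤ) (n : ℕ) : Ring.inverse (1 - T) (lp.single p (s + n) 1) s = a ^ n := by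
  have hterm : ∀ m : ℕ, (T ^ m) (lp.single p (s + n) 1) s = if m = n then a ^ n else 0 :=
    fun m => by
      rw [pow_apply_eq_pow_mul hT, lp.single_apply, Pi.single_apply]
      split_ifs <;> simp_all
  have h := ((evalCLM 𝕜 _ p s).comp
    (ContinuousLinearMap.apply 𝕜 _ (lp.single p (s + n) 1))).hasSum
    (hasSum_geom_series_inverse T ((norm_le_of_apply_eq_mul_apply_add_one hT hp).trans_lt ha))
  exact h.unique ((funext hterm).symm ▸ hasSum_ite_eq n (a ^ n))

end Coordinates

end WeightedShift

end lp

theorem norm_le_exp_mul_exp_neg_abs_of_banded {E : Type*} [SeminormedAddCommGroup E]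
    {M : ℤ → ℤ → E} {w : ℕ} (hM : ∀ s t, ‖M s t‖ ≤ 1)
    (hband : ∀ s t, (w : ℤ) < |s - t| → M s t = 0)
    {γ : ℝ} (hγ : 0 ≤ γ) (s t : ℤ) :
    ‖M s t‖ ≤ Real.exp (γ * w) * Real.exp (-γ * |(s : ℝ) - t|) := by
  by_cases hst : (w : ℤ) < |s - t|
  · rw [hband s t hst, norm_zero]
    positivity
  · have hst : |(s : ℝ) - t| ≤ w := by exact_mod_cast not_lt.1 hst
    calc ‖M s t‖ ≤ 1 := hM s t
      _ ≤ Real.exp (γ * (w - |(s : ℝ) - t|)) := Real.one_le_exp (by nlinarith)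
      _ = Real.exp (γ * w) * Real.exp (-γ * |(s : ℝ) - t|) := by rw [← Real.exp_add]; ring_nf

theorem not_exists_forall_exp_neg_mul_le {β γ : ℝ} (hβγ : β < γ) :
    ¬ ∃ C, ∀ n : ℕ, Real.exp (-β * n) ≤ C * Real.exp (-γ * n) := by
  rintro ⟨C, hC⟩
  obtain ⟨n, hn⟩ := ((Real.tendsto_exp_atTop.comp
    (tendsto_natCast_atTop_atTop.const_mul_atTop (sub_pos.2 hβγ))).eventually_gt_atTop C).exists
  have h : Real.exp ((γ - β) * n) * Real.exp (-γ * n) ≤ C * Real.exp (-γ * n) := by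
    rw [← Real.exp_add]; convert hC n using 2; ring
  exact hn.not_ge (le_of_mul_le_mul_right h (Real.exp_pos _))

theorem shift_decay_not_inverse_closed (k : ℕ) (hk : 0 < k)
    (Γ : lp (fun _ : ℤ => ℂ) 2 →L[ℂ] lp (fun _ : ℤ => ℂ) 2)
    (hΓ : ∀ s t : ℤ, (Γ (lp.single 2 t 1)) s =
      if t = s + 1 then (Real.exp (-1 / k) : ℂ) else 0) :
    (∀ γ > (0:ℝ), ∃ C > (0:ℝ), ∀ s t : ℤ,
      ‖((1 - Γ) (lp.single 2 t 1)) s‖ ≤ C * Real.exp (-γ * |(s : ℝ) - (t : ℝ)|)) ∧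
    (∀ γ : ℝ, γ > 1 / k →
      ¬ ∃ C > (0:ℝ), ∀ s t : ℤ,
        ‖((Ring.inverse (1 - Γ)) (lp.single 2 t 1)) s‖ ≤ C * Real.exp (-γ * |(s : ℝ) - (t : ℝ)|)) := by
  have hc : Real.exp (-1 / k) < 1 :=
    Real.exp_lt_one_iff.2 (div_neg_of_neg_of_pos (by norm_num) (by exact_mod_cast hk))
  have hnorm : ‖(Real.exp (-1 / k) : ℂ)‖ = Real.exp (-1 / k) := by
    rw [Complex.norm_real, Real.norm_of_nonneg (Real.exp_pos _).le]
  refine ⟨fun γ hγ => ⟨Real.exp (γ * (1 : ℕ)), Real.exp_pos _, fun s t => ?_⟩,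
    fun γ hγ ⟨C, _, hC⟩ => ?_⟩
  · exact norm_le_exp_mul_exp_neg_abs_of_banded
      (lp.norm_one_sub_apply_single_le_one hΓ (hnorm.trans_le hc.le))
      (fun s t hst => lp.one_sub_apply_single_eq_zero hΓ (mod_cast hst)) hγ.le s t
  · refine not_exists_forall_exp_neg_mul_le hγ ⟨C, fun n => ?_⟩
    have hinv := lp.inverse_one_sub_single_apply
      (lp.apply_eq_mul_apply_add_one_of_single hΓ ENNReal.ofNat_ne_top) ENNReal.ofNat_ne_top
      (hnorm.trans_lt hc) 0 n
    have h := hC 0 n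
    rw [zero_add] at hinv
    rw [hinv, norm_pow, hnorm, ← Real.exp_nat_mul] at h
    convert h using 2
    · ring
    · simp
end

section
/- Let Λ be a countable index set with metric d satisfying m_ε := sup_{s∈Λ} Σ_{t∈Λ} e^{-ε d(s,t)} < ∞ for all ε > 0. Let R be a matrix with |R_{s,t}| ≤ C e^{-γ'' d(s,t)} for all s,t ∈ Λ, where C ≥ 1 and γ'' > 0. Then for any γ' ∈ (0, γ'') and every n ≥ 1, the n-th matrix power satisfies |(Rⁿ)_{s,t}| ≤ Cⁿ (m_{γ''−γ'})^{n−1} e^{-γ' d(s,t)} for all s,t ∈ Λ. -/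
/-!
Write `ε = γ'' - γ'` and split `γ'' d(u,t) = γ' d(u,t) + ε d(u,t)`. By the triangle inequality
`γ' d(s,u) + γ' d(u,t) ≥ γ' d(s,t)`, so each term of `Σ_u (Rⁿ)_{s,u} R_{u,t}` is at most
`Cⁿ m_ε^{n-1} e^{-γ' d(s,t)} · C e^{-ε d(u,t)}`, and summing over `u` costs one factor `C m_ε`.
-/

open scoped Classical in
noncomputable def matPow {Λ : Type*} (R : Λ → Λ → ℂ) : ℕ → Λ → Λ → ℂ
  | 0 => fun s t => if s = t then 1 else 0
  | (n + 1) => fun s t => ∑' u : Λ, matPow R n s u * R u t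

open Real

theorem matPow_one {Λ : Type*} (R : Λ → Λ → ℂ) : matPow R 1 = R := by
  ext s t
  show ∑' u, matPow R 0 s u * R u t = R s t
  rw [tsum_eq_single s fun u hu => by simp [matPow, Ne.symm hu]]
  simp [matPow]

section ExpDecay

variable {Λ : Type*} [PseudoMetricSpace Λ]

def HasExpDecay (A : Λ → Λ → ℂ) (a γ : ℝ) : Prop :=
  ∀ s t, ‖A s t‖ ≤ a * exp (-γ * dist s t)

theorem HasExpDecay.mono_rate {A : Λ → Λ → ℂ} {a γ γ' : ℝ} (hA : HasExpDecay A a γ)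
    (ha : 0 ≤ a) (hγ : γ' ≤ γ) : HasExpDecay A a γ' := fun s t =>
  (hA s t).trans <| mul_le_mul_of_nonneg_left
    (exp_le_exp.2 <| by nlinarith [dist_nonneg (x := s) (y := t)]) ha

theorem exp_mul_exp_le_of_dist_triangle {γ' γ'' : ℝ} (hγ' : 0 ≤ γ') (s u t : Λ) :
    exp (-γ' * dist s u) * exp (-γ'' * dist u t) ≤
      exp (-γ' * dist s t) * exp (-(γ'' - γ') * dist t u) := by
  rw [← exp_add, ← exp_add, dist_comm t u]
  refine exp_le_exp.2 ?_
  nlinarith [dist_triangle s u t]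

theorem HasExpDecay.tsum_mul {A B : Λ → Λ → ℂ} {a b γ' γ'' M : ℝ}
    (hA : HasExpDecay A a γ') (hB : HasExpDecay B b γ'') (ha : 0 ≤ a) (hb : 0 ≤ b)
    (hγ' : 0 ≤ γ') (hsum : ∀ t, Summable fun u : Λ => exp (-(γ'' - γ') * dist t u))
    (hM : ∀ t, ∑' u : Λ, exp (-(γ'' - γ') * dist t u) ≤ M) :
    HasExpDecay (fun s t => ∑' u, A s u * B u t) (a * b * M) γ' := by
  intro s t
  set c := a * b * exp (-γ' * dist s t)
  have hc : 0 ≤ c := by positivity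
  have hterm : ∀ u, ‖A s u * B u t‖ ≤ c * exp (-(γ'' - γ') * dist t u) := fun u =>
    calc ‖A s u * B u t‖ ≤ a * exp (-γ' * dist s u) * (b * exp (-γ'' * dist u t)) := by
          rw [norm_mul]; exact mul_le_mul (hA s u) (hB u t) (norm_nonneg _) (by positivity)
      _ = a * b * (exp (-γ' * dist s u) * exp (-γ'' * dist u t)) := by ring
      _ ≤ a * b * (exp (-γ' * dist s t) * exp (-(γ'' - γ') * dist t u)) :=
          mul_le_mul_of_nonneg_left (exp_mul_exp_le_of_dist_triangle hγ' s u t) (by positivity)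
      _ = c * exp (-(γ'' - γ') * dist t u) := by ring
  calc ‖∑' u, A s u * B u t‖ ≤ c * ∑' u, exp (-(γ'' - γ') * dist t u) :=
        tsum_of_norm_bounded ((hsum t).hasSum.mul_left c) hterm
    _ ≤ c * M := mul_le_mul_of_nonneg_left (hM t) hc
    _ = a * b * M * exp (-γ' * dist s t) := by ring

theorem hasExpDecay_matPow {R : Λ → Λ → ℂ} {C γ' γ'' M : ℝ} (hR : HasExpDecay R C γ'')
    (hC : 0 ≤ C) (hγ' : 0 ≤ γ') (hγ : γ' ≤ γ'')
    (hsum : ∀ t, Summable fun u : Λ => exp (-(γ'' - γ') * dist t u))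
    (hM : ∀ t, ∑' u : Λ, exp (-(γ'' - γ') * dist t u) ≤ M) (hM0 : 0 ≤ M) {n : ℕ} (hn : 1 ≤ n) :
    HasExpDecay (matPow R n) (C ^ n * M ^ (n - 1)) γ' := by
  induction n, hn using Nat.le_induction with
  | base => simpa [matPow_one] using hR.mono_rate hC hγ
  | succ n hn ih =>
    obtain ⟨k, rfl⟩ := Nat.exists_eq_add_of_le' hn
    have hconst : C ^ (k + 1 + 1) * M ^ (k + 1 + 1 - 1) =
        C ^ (k + 1) * M ^ (k + 1 - 1) * C * M := by
      simp only [Nat.add_sub_cancel]; ring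
    rw [hconst]
    exact ih.tsum_mul hR (by positivity) hC hγ' hsum hM

end ExpDecay

theorem matrix_power_decay_general {Λ : Type*} [MetricSpace Λ]
    (hsum : ∀ ε > (0:ℝ), ∀ s : Λ, Summable (fun t : Λ => Real.exp (-ε * dist s t)))
    (hbdd : ∀ ε > (0:ℝ), BddAbove (Set.range fun s : Λ => ∑' t : Λ, Real.exp (-ε * dist s t)))
    (R : Λ → Λ → ℂ) (C γ'' : ℝ) (hC : 1 ≤ C)
    (hR : ∀ s t : Λ, ‖R s t‖ ≤ C * Real.exp (-γ'' * dist s t)) :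
    ∀ γ' : ℝ, 0 < γ' → γ' < γ'' → ∀ n : ℕ, 1 ≤ n → ∀ s t : Λ,
      ‖matPow R n s t‖ ≤
        C ^ n * (⨆ s' : Λ, ∑' t' : Λ, Real.exp (-(γ'' - γ') * dist s' t')) ^ (n - 1) *
          Real.exp (-γ' * dist s t) := by
  intro γ' hγ' hlt n hn
  have hε : 0 < γ'' - γ' := sub_pos.2 hlt
  exact hasExpDecay_matPow hR (by linarith) hγ'.le hlt.le (hsum _ hε)
    (le_ciSup (hbdd _ hε)) (Real.iSup_nonneg fun _ => tsum_nonneg fun _ => (exp_pos _).le) hn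

theorem matrix_power_decay {Λ : Type*} [Countable Λ] [MetricSpace Λ]
    (hsum : ∀ ε > (0:ℝ), ∀ s : Λ, Summable (fun t : Λ => Real.exp (-ε * dist s t)))
    (hbdd : ∀ ε > (0:ℝ), BddAbove (Set.range fun s : Λ => ∑' t : Λ, Real.exp (-ε * dist s t)))
    (R : Λ → Λ → ℂ) (C γ'' : ℝ) (hC : 1 ≤ C) (hγ'' : 0 < γ'')
    (hR : ∀ s t : Λ, ‖R s t‖ ≤ C * Real.exp (-γ'' * dist s t)) :
    ∀ γ' : ℝ, 0 < γ' → γ' < γ'' → ∀ n : ℕ, 1 ≤ n → ∀ s t : Λ,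
      ‖matPow R n s t‖ ≤
        C ^ n * (⨆ s' : Λ, ∑' t' : Λ, Real.exp (-(γ'' - γ') * dist s' t')) ^ (n - 1) *
          Real.exp (-γ' * dist s t) :=
  matrix_power_decay_general hsum hbdd R C γ'' hC hR
end

section
/- Let c₀, h > 0 and suppose |A_{s,t}| ≤ K₁ e^{p(c₀ p^h − d(s,t))} for all s,t ∈ Λ and all real p ≥ 1, where K₁ ≥ 1. Then |A_{s,t}| ≤ K₁ e^{c₀} e^{-d(s,t)} whenever d(s,t) ≤ c₀(1+h), and |A_{s,t}| ≤ K₁ e^{-c̃₀ d(s,t)^{1+1/h}} whenever d(s,t) > c₀(1+h), where c̃₀ = h c₀^{-1/h} (1+h)^{-1-1/h}. -/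
/-! Specialising the family of bounds to `p = 1` gives the first estimate. For large `d = d(s,t)`
the exponent `p (c₀ pʰ - d)` is minimised over `p > 0` at `p̃ = (d / (c₀ (1 + h)))^{1/h}`, where
`c₀ p̃ʰ = d / (1 + h)` and the exponent equals `-c̃₀ d^{1 + 1/h}`; `p̃ ≥ 1` exactly when
`d ≥ c₀ (1 + h)`. -/

namespace SuperexpDecay

noncomputable def optimalExponent (c h d : ℝ) : ℝ := (d / (c * (1 + h))) ^ h⁻¹

variable {c h d : ℝ}

theorem one_le_optimalExponent (hc : 0 < c) (hh : 0 < h) (hd : c * (1 + h) ≤ d) :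
    1 ≤ optimalExponent c h d := by
  have hcd : 0 < c * (1 + h) := by positivity
  exact Real.one_le_rpow ((one_le_div hcd).2 hd) (inv_nonneg.2 hh.le)

theorem optimalExponent_rpow (hc : 0 < c) (hh : 0 < h) (hd : 0 ≤ d) :
    optimalExponent c h d ^ h = d / (c * (1 + h)) :=
  Real.rpow_inv_rpow (by positivity) hh.ne'

theorem optimalExponent_eq (hc : 0 < c) (hh : 0 < h) (hd : 0 ≤ d) :
    optimalExponent c h d = d ^ h⁻¹ * (c ^ (-h⁻¹) * (1 + h) ^ (-h⁻¹)) := by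
  have h1h : 0 < 1 + h := by linarith
  rw [optimalExponent, div_eq_mul_inv, Real.mul_rpow hd (by positivity), mul_inv,
    Real.mul_rpow (inv_nonneg.2 hc.le) (inv_nonneg.2 h1h.le), Real.inv_rpow hc.le,
    Real.inv_rpow h1h.le, Real.rpow_neg hc.le, Real.rpow_neg h1h.le]

theorem optimalExponent_mul_sub (hc : 0 < c) (hh : 0 < h) (hd : 0 ≤ d) :
    optimalExponent c h d * (c * optimalExponent c h d ^ h - d) =
      -(h * c ^ (-1 / h) * (1 + h) ^ (-1 - 1 / h)) * d ^ (1 + 1 / h) := by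
  have h1h : 0 < 1 + h := by linarith
  have hinner : c * optimalExponent c h d ^ h - d = -(h / (1 + h)) * d := by
    rw [optimalExponent_rpow hc hh hd]
    field_simp
    ring
  have hd_pow : d ^ (1 + 1 / h) = d * d ^ h⁻¹ := by
    rw [Real.rpow_add' hd (by positivity), Real.rpow_one, one_div]
  have h1h_pow : (1 + h) ^ (-1 - 1 / h) = (1 + h)⁻¹ * (1 + h) ^ (-h⁻¹) := by
    rw [show -1 - 1 / h = -1 + -h⁻¹ by ring, Real.rpow_add h1h, Real.rpow_neg_one]
  rw [hinner, optimalExponent_eq hc hh hd, hd_pow, h1h_pow, show -1 / h = -h⁻¹ by ring]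
  field_simp

end SuperexpDecay

open SuperexpDecay in
theorem superexp_decay_from_family_general {Λ : Type*} [MetricSpace Λ]
    (A : Λ → Λ → ℂ) (c₀ h K₁ : ℝ) (hc₀ : 0 < c₀) (hh : 0 < h)
    (hA : ∀ p : ℝ, 1 ≤ p → ∀ s t : Λ,
      ‖A s t‖ ≤ K₁ * Real.exp (p * (c₀ * p ^ h - dist s t))) :
    ∀ s t : Λ,
      (dist s t ≤ c₀ * (1 + h) →
        ‖A s t‖ ≤ K₁ * Real.exp c₀ * Real.exp (-dist s t)) ∧
      (dist s t > c₀ * (1 + h) →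
        ‖A s t‖ ≤ K₁ * Real.exp (-(h * c₀ ^ (-1 / h) * (1 + h) ^ (-1 - 1 / h)) *
          dist s t ^ (1 + 1 / h))) := by
  intro s t
  refine ⟨fun _ => ?_, fun hd => ?_⟩
  · simpa [Real.one_rpow, Real.exp_add, sub_eq_add_neg, mul_assoc] using hA 1 le_rfl s t
  · have hp := one_le_optimalExponent hc₀ hh hd.le
    rw [← optimalExponent_mul_sub hc₀ hh dist_nonneg]
    exact hA _ hp s t

theorem superexp_decay_from_family {Λ : Type*} [MetricSpace Λ]
    (A : Λ → Λ → ℂ) (c₀ h K₁ : ℝ) (hc₀ : 0 < c₀) (hh : 0 < h) (hK₁ : 1 ≤ K₁)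
    (hA : ∀ p : ℝ, 1 ≤ p → ∀ s t : Λ,
      ‖A s t‖ ≤ K₁ * Real.exp (p * (c₀ * p ^ h - dist s t))) :
    ∀ s t : Λ,
      (dist s t ≤ c₀ * (1 + h) →
        ‖A s t‖ ≤ K₁ * Real.exp c₀ * Real.exp (-dist s t)) ∧
      (dist s t > c₀ * (1 + h) →
        ‖A s t‖ ≤ K₁ * Real.exp (-(h * c₀ ^ (-1 / h) * (1 + h) ^ (-1 - 1 / h)) *
          dist s t ^ (1 + 1 / h))) :=
  superexp_decay_from_family_general A c₀ h K₁ hc₀ hh hA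
end
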